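/- arXiv:1004.3025 — 2 statements merged into one kernel-verified Lean document; each statement's English description precedes it below -/
import Mathlib

section
/- Let P be a nice polygon. The clockwise correspondence, which assigns to each edge e of P the spoke joining the head vertex v of e to the unique vertex w of P farthest from the line containing e, is a bijection between the edges of P and the spokes of P. -/
open Set Bornology

noncomputable section

/-- The cross product (determinant) of two plane vectors. -/
def cross2 (a b : ℝ × ℝ) : ℝ := a.1 * b.2 - a.2 * b.1

/-- A nice polygon: a convex polygon in the plane, with vertices `vtx 0, …, vtx (n-1)`
listed clockwise (every other vertex lies strictly to the right of every directed edge),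
no two of whose sides are parallel.  The field `far i` records the unique vertex of the
polygon farthest from the line supporting the `i`-th edge. -/
structure NicePolygon where
  n : ℕ
  three_le : 3 ≤ n
  vtx : ZMod n → ℝ × ℝ
  strict_convex : ∀ i j : ZMod n, j ≠ i → j ≠ i + 1 →
    cross2 (vtx (i + 1) - vtx i) (vtx j - vtx i) < 0
  no_parallel : ∀ i j : ZMod n, i ≠ j →
    cross2 (vtx (i + 1) - vtx i) (vtx (j + 1) - vtx j) ≠ 0
  far : ZMod n → ZMod n
  far_spec : ∀ i j : ZMod n, j ≠ far i →
    cross2 (vtx (i + 1) - vtx i) (vtx (far i) - vtx i) <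
      cross2 (vtx (i + 1) - vtx i) (vtx j - vtx i)

namespace NicePolygon

variable (Q : NicePolygon)

/-- The polygon as a convex body. -/
def body : Set (ℝ × ℝ) := convexHull ℝ (Set.range Q.vtx)

def IsVertex (v : ℝ × ℝ) : Prop := ∃ i, Q.vtx i = v

def edgeDir (i : ZMod Q.n) : ℝ × ℝ := Q.vtx (i + 1) - Q.vtx i

/-- The (oriented) edge `e_i` as a set. -/
def edgeSet (i : ZMod Q.n) : Set (ℝ × ℝ) := segment ℝ (Q.vtx i) (Q.vtx (i + 1))

/-- Signed coordinate with respect to the line through edge `i`. -/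
def sgn (i : ZMod Q.n) (x : ℝ × ℝ) : ℝ := cross2 (Q.edgeDir i) (x - Q.vtx i)

/-- Signed distance datum of the farthest vertex from the line of edge `i`. -/
def depth (i : ZMod Q.n) : ℝ := Q.sgn i (Q.vtx (Q.far i))

/-- The vector `V_i = 2 (w - v)` where `v` is the head vertex of edge `i` and `w` the
farthest vertex from the line of edge `i`. -/
def vvec (i : ZMod Q.n) : ℝ × ℝ := (2 : ℝ) • (Q.vtx (Q.far i) - Q.vtx (i + 1))

/-- The pinwheel strip `Σ_i`: it is bounded by the line `L` through edge `i` and the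
parallel line `L'` such that the farthest vertex is equidistant from `L` and `L'`. -/
def strip (i : ZMod Q.n) : Set (ℝ × ℝ) := {x | Q.sgn i x ∈ Set.uIcc 0 (2 * Q.depth i)}

/-- The strip map `μ_i`: the identity on the interior of the strip; otherwise move by
`± V_i`, whichever is closer to the strip. -/
def stripMap (i : ZMod Q.n) (x : ℝ × ℝ) : ℝ × ℝ := by
  classical
  exact
    if x ∈ interior (Q.strip i) then x
    else if Metric.infDist (x + Q.vvec i) (Q.strip i)
            < Metric.infDist (x - Q.vvec i) (Q.strip i) then x + Q.vvec i
    else if Metric.infDist (x - Q.vvec i) (Q.strip i)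
            < Metric.infDist (x + Q.vvec i) (Q.strip i) then x - Q.vvec i
    else x

/-- The pinwheel map `ψ*` on `ℝ² × ℤ/n`. -/
def pinwheel (pk : (ℝ × ℝ) × ZMod Q.n) : (ℝ × ℝ) × ZMod Q.n := by
  classical
  exact
    if Q.stripMap (pk.2 + 1) pk.1 = pk.1 then (pk.1, pk.2 + 1)
    else (Q.stripMap (pk.2 + 1) pk.1, pk.2)

/-- The outer billiards relation: the segment from `x` to `y` is tangent to the polygon
at its midpoint and the polygon lies (weakly) to the right of the ray from `x` to `y`. -/
def obRel (x y : ℝ × ℝ) : Prop :=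
  x ∉ Q.body ∧ midpoint ℝ x y ∈ Q.body ∧ ∀ z ∈ Q.body, cross2 (y - x) (z - x) ≤ 0

/-- The square outer billiards map `ψ`, as a relation; it is the identity on the
polygon itself. -/
def sqRel (p q : ℝ × ℝ) : Prop :=
  (p ∈ Q.body ∧ q = p) ∨ ∃ r, Q.obRel p r ∧ Q.obRel r q

/-- The tile of the forward partition labelled by the ordered vertex pair `(v, w)`:
the set of points whose first tangent vertex is `v` and whose second is `w`, so that
`ψ(p) = p + 2(w - v)` there. -/
def tile (v w : ℝ × ℝ) : Set (ℝ × ℝ) :=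
  {p | Q.obRel p ((2 : ℝ) • v - p) ∧
       Q.obRel ((2 : ℝ) • v - p) ((2 : ℝ) • w - (2 : ℝ) • v + p)}

/-- The value of the square outer billiards map on the tile labelled `(v, w)`. -/
def psiOn (v w p : ℝ × ℝ) : ℝ × ℝ := p + (2 : ℝ) • (w - v)

/-- A (nonempty) tile of the forward partition. -/
def IsForwardTile (T : Set (ℝ × ℝ)) : Prop :=
  ∃ v w, Q.IsVertex v ∧ Q.IsVertex w ∧ T = Q.tile v w ∧ T.Nonempty

/-- A strip: the region between two distinct parallel lines. -/
def IsStrip (S : Set (ℝ × ℝ)) : Prop :=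
  ∃ (d : ℝ × ℝ) (c₁ c₂ : ℝ), d ≠ 0 ∧ c₁ < c₂ ∧
    S = {x | c₁ ≤ cross2 d x ∧ cross2 d x ≤ c₂}

/-- A minimal strip: it contains the interior of the polygon in its interior and
no proper sub-strip does so. -/
def IsMinimalStrip (S : Set (ℝ × ℝ)) : Prop :=
  IsStrip S ∧ interior Q.body ⊆ interior S ∧
    ∀ S', IsStrip S' → interior Q.body ⊆ interior S' → S' ⊆ S → S' = S

/-- `(v, w)` is a maximal pair: some minimal strip has `v` and `w` on its two distinct
boundary lines. -/
def MaximalPair (v w : ℝ × ℝ) : Prop :=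
  Q.IsVertex v ∧ Q.IsVertex w ∧
    ∃ (d : ℝ × ℝ) (c₁ c₂ : ℝ), d ≠ 0 ∧ c₁ < c₂ ∧
      Q.IsMinimalStrip {x | c₁ ≤ cross2 d x ∧ cross2 d x ≤ c₂} ∧
      ((cross2 d v = c₁ ∧ cross2 d w = c₂) ∨ (cross2 d v = c₂ ∧ cross2 d w = c₁))

/-- A spoke: the segment joining the two vertices of a maximal pair. -/
def IsSpoke (S : Set (ℝ × ℝ)) : Prop := ∃ v w, Q.MaximalPair v w ∧ S = segment ℝ v w

/-- The spoke assigned to edge `i` by the clockwise correspondence: it joins the head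
vertex of edge `i` to the vertex farthest from the line through edge `i`. -/
def spoke (i : ZMod Q.n) : Set (ℝ × ℝ) := segment ℝ (Q.vtx (i + 1)) (Q.vtx (Q.far i))

/-- The endpoint pair of the spoke `S_i`. -/
def spokeEnds (i : ZMod Q.n) : Set (ℝ × ℝ) := {Q.vtx (i + 1), Q.vtx (Q.far i)}

/-- `S_j` is special if `S_{j-1}`, `S_j`, `S_{j+1}` share a common vertex. -/
def SpecialSpoke (j : ZMod Q.n) : Prop :=
  (Q.spokeEnds (j - 1) ∩ Q.spokeEnds j ∩ Q.spokeEnds (j + 1)).Nonempty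

/-- The boundary arc starting at vertex `i` and going clockwise through `s` edges. -/
def cwArc (i : ZMod Q.n) (s : ℕ) : Set (ℝ × ℝ) :=
  ⋃ t ∈ Finset.range s,
    segment ℝ (Q.vtx (i + (t : ZMod Q.n))) (Q.vtx (i + (t : ZMod Q.n) + 1))

/-- `x` is a vertex on the clockwise path along the boundary from `v` to `w`. -/
def OnCwArc (v x w : ℝ × ℝ) : Prop :=
  ∃ (i : ZMod Q.n) (s t : ℕ), s < Q.n ∧ t ≤ s ∧
    v = Q.vtx i ∧ w = Q.vtx (i + (s : ZMod Q.n)) ∧ x = Q.vtx (i + (t : ZMod Q.n))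

/-- `(v, x)` is an admissible pair: `x` lies on the clockwise path from `v` to some
vertex `w` making `(v, w)` a maximal pair. -/
def AdmissiblePair (v x : ℝ × ℝ) : Prop := ∃ w, Q.MaximalPair v w ∧ Q.OnCwArc v x w

/-- An arc of the boundary of the polygon with endpoints `p` and `q`. -/
def IsBdryArcFromTo (A : Set (ℝ × ℝ)) (p q : ℝ × ℝ) : Prop :=
  ∃ (i : ZMod Q.n) (s : ℕ), s ≤ Q.n ∧
    ((p = Q.vtx i ∧ q = Q.vtx (i + (s : ZMod Q.n))) ∨
     (q = Q.vtx i ∧ p = Q.vtx (i + (s : ZMod Q.n)))) ∧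
    A = Q.cwArc i s

/-- Four vertices in counterclockwise cyclic order on the boundary (the vertices are
indexed clockwise, so counterclockwise order is decreasing index). -/
def CcwOrdered4 (p₁ p₂ p₃ p₄ : ℝ × ℝ) : Prop :=
  ∃ (i : ZMod Q.n) (t₂ t₃ t₄ : ℕ), 0 < t₂ ∧ t₂ < t₃ ∧ t₃ < t₄ ∧ t₄ < Q.n ∧
    p₁ = Q.vtx i ∧ p₂ = Q.vtx (i - (t₂ : ZMod Q.n)) ∧
    p₃ = Q.vtx (i - (t₃ : ZMod Q.n)) ∧ p₄ = Q.vtx (i - (t₄ : ZMod Q.n))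

end NicePolygon

/-- An admissible path of a nice polygon: an odd number of spokes traversed compatibly
with the cyclic order of the spokes (indices lifted to `ℤ`, strictly increasing, and
not wrapping all the way around the polygon), with consecutive spokes sharing an
endpoint; `ept k` is the initial endpoint of the `k`-th spoke of the path and
`ept len` the final endpoint. -/
structure AdmissiblePath (Q : NicePolygon) where
  len : ℕ
  pos : 0 < len
  odd : Odd len
  idx : Fin len → ℤ
  mono : StrictMono idx
  base_nonneg : 0 ≤ idx ⟨0, pos⟩
  base_lt : idx ⟨0, pos⟩ < (Q.n : ℤ)
  span : idx ⟨len - 1, by omega⟩ - idx ⟨0, pos⟩ < (Q.n : ℤ)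
  ept : Fin (len + 1) → ℝ × ℝ
  spoke_eq : ∀ k : Fin len,
    ({ept k.castSucc, ept k.succ} : Set (ℝ × ℝ)) = Q.spokeEnds ((idx k : ZMod Q.n))

namespace AdmissiblePath

variable {Q : NicePolygon} (γ : AdmissiblePath Q)

/-- The index `a` of the first spoke of the path `a → b`. -/
def aIdx : ℤ := γ.idx ⟨0, γ.pos⟩

/-- The index `b` of the last spoke of the path `a → b`. -/
def bIdx : ℤ := γ.idx ⟨γ.len - 1, by have := γ.pos; omega⟩

/-- The first vertex of the path. -/
def firstV : ℝ × ℝ := γ.ept 0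

/-- The last vertex of the path. -/
def lastV : ℝ × ℝ := γ.ept (Fin.last γ.len)

/-- The tile `T(a → b)` of the forward partition corresponding to the path. -/
def tileSet : Set (ℝ × ℝ) := Q.tile γ.firstV γ.lastV

end AdmissiblePath

namespace NicePolygon

variable (Q : NicePolygon)

/-- Forward-unbounded orbits of the square outer billiards map. -/
def FwdUnbOrbitPsi (O : Set (ℝ × ℝ)) : Prop :=
  ∃ o : ℤ → ℝ × ℝ, (∀ t, Q.sqRel (o t) (o (t + 1))) ∧ O = Set.range o ∧
    ¬ Bornology.IsBounded (o '' Set.Ici (0 : ℤ))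

/-- Forward-unbounded orbits of the pinwheel map. -/
def FwdUnbOrbitPin (O : Set ((ℝ × ℝ) × ZMod Q.n)) : Prop :=
  ∃ o : ℤ → (ℝ × ℝ) × ZMod Q.n, (∀ t, o (t + 1) = Q.pinwheel (o t)) ∧
    O = Set.range o ∧
    ¬ Bornology.IsBounded ((fun t => (o t).1) '' Set.Ici (0 : ℤ))

/-- An orbit of the pinwheel map is natural (w.r.t. the section `ι`) if it lies in the
range of `ι` sufficiently far from the origin. -/
def NaturalOrbit (ι : ℝ × ℝ → (ℝ × ℝ) × ZMod Q.n)
    (O : Set ((ℝ × ℝ) × ZMod Q.n)) : Prop :=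
  ∃ R : ℝ, ∀ x ∈ O, R < ‖x.1‖ → x ∈ Set.range ι

/-- `X̂ = ⋃_j Σ_j × {j}`. -/
def Xhat : Set ((ℝ × ℝ) × ZMod Q.n) := {pk | pk.1 ∈ Q.strip pk.2}

/-- The first-return relation of the pinwheel map to `X̂`. -/
def retRel (x y : (ℝ × ℝ) × ZMod Q.n) : Prop :=
  x ∈ Q.Xhat ∧ ∃ r : ℕ, 1 ≤ r ∧ y = Q.pinwheel^[r] x ∧ y ∈ Q.Xhat ∧
    ∀ s, 1 ≤ s → s < r → Q.pinwheel^[s] x ∉ Q.Xhat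

/-- Forward-unbounded orbits of the first-return map `ψ̂` of the pinwheel map to `X̂`. -/
def FwdUnbOrbitRet (O : Set ((ℝ × ℝ) × ZMod Q.n)) : Prop :=
  ∃ o : ℤ → (ℝ × ℝ) × ZMod Q.n, (∀ t, Q.retRel (o t) (o (t + 1))) ∧
    O = Set.range o ∧
    ¬ Bornology.IsBounded ((fun t => (o t).1) '' Set.Ici (0 : ℤ))

/-- The first-return relation `Ψ` of the square outer billiards map to the strip `Σ₁`. -/
def psiRetRel (p q : ℝ × ℝ) : Prop :=
  p ∈ Q.strip 1 ∧ q ∈ Q.strip 1 ∧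
    ∃ (r : ℕ) (o : ℕ → ℝ × ℝ), 1 ≤ r ∧ o 0 = p ∧ o r = q ∧
      (∀ s < r, Q.sqRel (o s) (o (s + 1))) ∧
      ∀ s, 0 < s → s < r → o s ∉ Q.strip 1

/-- The pinwheel return map `Ψ̂ = (ψ̂)ⁿ` on `Σ₁` (identified with `Σ₁ × {1}`),
as a relation. -/
def hatPsiRel (p q : ℝ × ℝ) : Prop :=
  ∃ o : ℕ → (ℝ × ℝ) × ZMod Q.n, o 0 = (p, 1) ∧ o Q.n = (q, 1) ∧
    ∀ s < Q.n, Q.retRel (o s) (o (s + 1))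

/-- The polygon is quasirational if it can be rescaled so that the areas of the `n`
parallelograms `Σ_j ∩ Σ_{j+1}` are all integers. -/
def Quasirational : Prop :=
  ∃ lam : ℝ, 0 < lam ∧ ∀ j : ZMod Q.n, ∃ z : ℤ,
    lam ^ 2 * (MeasureTheory.volume (Q.strip j ∩ Q.strip (j + 1))).toReal = (z : ℝ)

end NicePolygon

/-- Forward-unbounded orbits of a relation on the plane. -/
def FwdUnbOrbitRel (Rel : ℝ × ℝ → ℝ × ℝ → Prop) (O : Set (ℝ × ℝ)) : Prop :=
  ∃ o : ℤ → ℝ × ℝ, (∀ t, Rel (o t) (o (t + 1))) ∧ O = Set.range o ∧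
    ¬ Bornology.IsBounded (o '' Set.Ici (0 : ℤ))

section Cross2Aux

lemma cross2_self (a : ℝ × ℝ) : cross2 a a = 0 := by simp [cross2]; ring

lemma cross2_skew (a b : ℝ × ℝ) : cross2 a b = - cross2 b a := by simp [cross2]; ring

lemma cross2_smul_left (k : ℝ) (a b : ℝ × ℝ) : cross2 (k • a) b = k * cross2 a b := by
  simp [cross2, Prod.smul_def]; ring

lemma cross2_sub_right (d a b : ℝ × ℝ) : cross2 d (a - b) = cross2 d a - cross2 d b := by
  simp [cross2]; ring

lemma cross2_sub_sub (d a b c : ℝ × ℝ) :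
    cross2 d (a - c) - cross2 d (b - c) = cross2 d (a - b) := by
  simp [cross2]; ring

lemma cross2_zero_right (d : ℝ × ℝ) : cross2 d 0 = 0 := by simp [cross2]

lemma cross2_neg_right (d a : ℝ × ℝ) : cross2 d (-a) = - cross2 d a := by
  simp [cross2]; ring

lemma cross2_decomp (a b x : ℝ × ℝ) :
    cross2 a b • x = cross2 x b • a + cross2 a x • b := by
  refine Prod.ext ?_ ?_ <;> simp [cross2, Prod.smul_def] <;> ring

lemma cross2_jacobi (a b x z : ℝ × ℝ) :
    cross2 a b * cross2 x z = cross2 x b * cross2 a z + cross2 a x * cross2 b z := by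
  simp [cross2]; ring

lemma cross2_continuous (d : ℝ × ℝ) : Continuous fun x : ℝ × ℝ => cross2 d x := by
  unfold cross2; fun_prop

lemma cross2_combo (d x y : ℝ × ℝ) (a b : ℝ) :
    cross2 d (a • x + b • y) = a * cross2 d x + b * cross2 d y := by
  simp [cross2, Prod.smul_def]; ring

lemma convex_stripSet (d : ℝ × ℝ) (c₁ c₂ : ℝ) :
    Convex ℝ {x : ℝ × ℝ | c₁ ≤ cross2 d x ∧ cross2 d x ≤ c₂} := by
  intro x hx y hy a b ha hb hab
  obtain ⟨hx1, hx2⟩ := hx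
  obtain ⟨hy1, hy2⟩ := hy
  have m1 := mul_le_mul_of_nonneg_left hx1 ha
  have m2 := mul_le_mul_of_nonneg_left hy1 hb
  have m3 := mul_le_mul_of_nonneg_left hx2 ha
  have m4 := mul_le_mul_of_nonneg_left hy2 hb
  have e1 : a * c₁ + b * c₁ = c₁ := by rw [← add_mul, hab, one_mul]
  have e2 : a * c₂ + b * c₂ = c₂ := by rw [← add_mul, hab, one_mul]
  constructor <;> rw [cross2_combo] <;> linarith

lemma isClosed_stripSet (d : ℝ × ℝ) (c₁ c₂ : ℝ) :
    IsClosed {x : ℝ × ℝ | c₁ ≤ cross2 d x ∧ cross2 d x ≤ c₂} :=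
  IsClosed.preimage (cross2_continuous d) isClosed_Icc

lemma exists_cross2_eq {d : ℝ × ℝ} (hd : d ≠ 0) (r : ℝ) : ∃ x, cross2 d x = r := by
  rcases eq_or_ne d.1 0 with h1 | h1
  · have h2 : d.2 ≠ 0 := by
      intro h2; exact hd (Prod.ext h1 h2)
    exact ⟨(-r / d.2, 0), by simp only [cross2]; field_simp; ring⟩
  · exact ⟨(0, r / d.1), by simp only [cross2]; field_simp; ring⟩

lemma parallel_of_cross2_eq_zero {d d' : ℝ × ℝ} (hd : d ≠ 0) (h : cross2 d d' = 0) :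
    ∃ k : ℝ, d' = k • d := by
  rcases eq_or_ne d.1 0 with h1 | h1
  · have h2 : d.2 ≠ 0 := by intro h2; exact hd (Prod.ext h1 h2)
    refine ⟨d'.2 / d.2, Prod.ext ?_ ?_⟩
    · simp only [Prod.smul_def, smul_eq_mul]
      unfold cross2 at h
      field_simp
      nlinarith [h]
    · simp only [Prod.smul_def, smul_eq_mul]
      field_simp
  · refine ⟨d'.1 / d.1, Prod.ext ?_ ?_⟩
    · simp only [Prod.smul_def, smul_eq_mul]; field_simp
    · simp only [Prod.smul_def, smul_eq_mul]
      unfold cross2 at h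
      field_simp
      nlinarith [h]

lemma segment_ends_cases {a b c d : ℝ × ℝ} (hab : a ≠ b) (hcd : c ≠ d)
    (h : segment ℝ a b = segment ℝ c d) : (a = c ∧ b = d) ∨ (a = d ∧ b = c) := by
  have key : ∀ x y : ℝ × ℝ, x ≠ y → x ∈ segment ℝ c d → c ∈ segment ℝ x y →
      d ∈ segment ℝ x y → x = c ∨ x = d := by
    intro x y hxy hx hc hd'
    obtain ⟨u₁, u₂, hu₁, hu₂, hu, hux⟩ := hx
    obtain ⟨s₁, s₂, hs₁, hs₂, hs, hsc⟩ := hc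
    obtain ⟨r₁, r₂, hr₁, hr₂, hr, hrd⟩ := hd'
    have hxx : (u₁ * s₂ + u₂ * r₂) • (y - x) = 0 := by
      have hthis : u₁ • (s₁ • x + s₂ • y) + u₂ • (r₁ • x + r₂ • y) = x := by
        rw [hsc, hrd, hux]
      have h2 : (u₁ * s₁ + u₂ * r₁) • x + (u₁ * s₂ + u₂ * r₂) • y = x := by
        have expand : (u₁ * s₁ + u₂ * r₁) • x + (u₁ * s₂ + u₂ * r₂) • y
            = u₁ • (s₁ • x + s₂ • y) + u₂ • (r₁ • x + r₂ • y) := by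
          simp only [smul_add, smul_smul, add_smul]; abel
        rw [expand, hthis]
      have h3 : (u₁ * s₁ + u₂ * r₁) + (u₁ * s₂ + u₂ * r₂) = 1 := by
        have e1 : s₂ = 1 - s₁ := by linarith
        have e2 : r₂ = 1 - r₁ := by linarith
        have e3 : u₂ = 1 - u₁ := by linarith
        rw [e1, e2, e3]; ring
      have h4 : (u₁ * s₁ + u₂ * r₁ : ℝ) = 1 - (u₁ * s₂ + u₂ * r₂) := by linarith
      rw [h4] at h2
      calc (u₁ * s₂ + u₂ * r₂) • (y - x)
          = ((1 - (u₁ * s₂ + u₂ * r₂)) • x + (u₁ * s₂ + u₂ * r₂) • y) - x := by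
            rw [smul_sub, sub_smul, one_smul]; abel
        _ = 0 := by rw [h2, sub_self]
    have hsum : u₁ * s₂ + u₂ * r₂ = 0 := by
      rcases smul_eq_zero.mp hxx with h0 | h0
      · exact h0
      · exact absurd (sub_eq_zero.mp h0) (Ne.symm hxy)
    have h1 : u₁ * s₂ = 0 := by nlinarith [mul_nonneg hu₁ hs₂, mul_nonneg hu₂ hr₂]
    rcases mul_eq_zero.mp h1 with h0 | h0
    · right
      have hu2 : u₂ = 1 := by linarith
      rw [h0, hu2] at hux; rw [← hux]; simp
    · left
      have hs1 : s₁ = 1 := by linarith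
      rw [h0, hs1] at hsc; rw [← hsc]; simp
  have hac : a ∈ segment ℝ c d := by rw [← h]; exact left_mem_segment ℝ a b
  have hbc : b ∈ segment ℝ c d := by rw [← h]; exact right_mem_segment ℝ a b
  have hca : c ∈ segment ℝ a b := by rw [h]; exact left_mem_segment ℝ c d
  have hda : d ∈ segment ℝ a b := by rw [h]; exact right_mem_segment ℝ c d
  have ha : a = c ∨ a = d := key a b hab hac hca hda
  have hb : b = c ∨ b = d := by
    apply key b a (Ne.symm hab) hbc
    · rw [segment_symm]; exact hca
    · rw [segment_symm]; exact hda
  rcases ha with ha | ha <;> rcases hb with hb | hb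
  · exact absurd (ha.trans hb.symm) hab
  · exact Or.inl ⟨ha, hb⟩
  · exact Or.inr ⟨ha, hb⟩
  · exact absurd (ha.trans hb.symm) hab

end Cross2Aux


namespace NicePolygon

variable (Q : NicePolygon)

lemma nz : NeZero Q.n := ⟨by have := Q.three_le; omega⟩

lemma coe_ne (a b : ℕ) (ha : a < Q.n) (hb : b < Q.n) (hab : a ≠ b) :
    (a : ZMod Q.n) ≠ (b : ZMod Q.n) := by
  haveI := Q.nz
  intro h
  have h2 := congrArg ZMod.val h
  rw [ZMod.val_cast_of_lt ha, ZMod.val_cast_of_lt hb] at h2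
  exact hab h2

lemma one_ne_zero' : (1 : ZMod Q.n) ≠ 0 := by
  have := Q.coe_ne 1 0 (by have := Q.three_le; omega) (by have := Q.three_le; omega)
    (by omega)
  simpa using this

lemma two_ne_zero' : (2 : ZMod Q.n) ≠ 0 := by
  have := Q.coe_ne 2 0 (by have := Q.three_le; omega) (by have := Q.three_le; omega)
    (by omega)
  simpa using this

lemma two_ne_one' : (2 : ZMod Q.n) ≠ 1 := by
  have := Q.coe_ne 2 1 (by have := Q.three_le; omega) (by have := Q.three_le; omega)
    (by omega)
  simpa using this

lemma add_one_ne (i : ZMod Q.n) : i + 1 ≠ i := by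
  intro h
  apply Q.one_ne_zero'
  have : i + 1 = i + 0 := by rw [add_zero]; exact h
  exact add_left_cancel this

lemma add_two_ne (i : ZMod Q.n) : i + 2 ≠ i := by
  intro h
  apply Q.two_ne_zero'
  have : i + 2 = i + 0 := by rw [add_zero]; exact h
  exact add_left_cancel this

lemma add_two_ne_add_one (i : ZMod Q.n) : i + 2 ≠ i + 1 := by
  intro h
  exact Q.two_ne_one' (add_left_cancel h)

lemma sub_one_add_one (i : ZMod Q.n) : i - 1 + 1 = i := by ring

lemma vtx_injective : Function.Injective Q.vtx := by
  intro a b h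
  by_contra hab
  by_cases h1 : b = a + 1
  · subst h1
    have h2 := Q.strict_convex a (a + 2) (Q.add_two_ne a) (Q.add_two_ne_add_one a)
    rw [← h, sub_self] at h2
    simp [cross2] at h2
  · have h2 := Q.strict_convex a b (fun hc => hab hc.symm) h1
    rw [h, sub_self] at h2
    simp [cross2] at h2

lemma edgeDir_ne_zero (i : ZMod Q.n) : Q.edgeDir i ≠ 0 := by
  intro h
  have : Q.vtx (i + 1) = Q.vtx i := by
    have := sub_eq_zero.mp h
    exact this
  exact Q.add_one_ne i (Q.vtx_injective this)

lemma sgn_nonpos (i k : ZMod Q.n) : cross2 (Q.edgeDir i) (Q.vtx k - Q.vtx i) ≤ 0 := by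
  by_cases h1 : k = i
  · rw [h1, sub_self, cross2_zero_right]
  · by_cases h2 : k = i + 1
    · rw [h2]
      have : Q.vtx (i + 1) - Q.vtx i = Q.edgeDir i := rfl
      rw [this, cross2_self]
    · exact le_of_lt (Q.strict_convex i k h1 h2)

lemma far_ne_self (i : ZMod Q.n) : Q.far i ≠ i := by
  intro h
  have hE : Q.vtx (i + 1) - Q.vtx i = Q.edgeDir i := rfl
  have hconv := Q.strict_convex i (i + 2) (Q.add_two_ne i) (Q.add_two_ne_add_one i)
  rw [hE] at hconv
  have hs := Q.far_spec i (i + 2) (by rw [h]; exact Q.add_two_ne i)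
  rw [h, sub_self, cross2_zero_right, hE] at hs
  linarith

lemma far_ne_head (i : ZMod Q.n) : Q.far i ≠ i + 1 := by
  intro h
  have hE : Q.vtx (i + 1) - Q.vtx i = Q.edgeDir i := rfl
  have hconv := Q.strict_convex i (i + 2) (Q.add_two_ne i) (Q.add_two_ne_add_one i)
  rw [hE] at hconv
  have hs := Q.far_spec i (i + 2) (by rw [h]; exact Q.add_two_ne_add_one i)
  rw [h] at hs
  rw [hE, cross2_self] at hs
  linarith

lemma far_min (i k : ZMod Q.n) :
    cross2 (Q.edgeDir i) (Q.vtx (Q.far i) - Q.vtx i) ≤ cross2 (Q.edgeDir i) (Q.vtx k - Q.vtx i) := by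
  by_cases h : k = Q.far i
  · rw [h]
  · exact le_of_lt (Q.far_spec i k h)

lemma depth_neg (i : ZMod Q.n) : cross2 (Q.edgeDir i) (Q.vtx (Q.far i) - Q.vtx i) < 0 :=
  Q.strict_convex i (Q.far i) (Q.far_ne_self i) (Q.far_ne_head i)

lemma far_eq (j q : ZMod Q.n)
    (h : ∀ k, cross2 (Q.edgeDir j) (Q.vtx q - Q.vtx j) ≤ cross2 (Q.edgeDir j) (Q.vtx k - Q.vtx j)) :
    Q.far j = q := by
  by_contra hne
  have hE : Q.vtx (j + 1) - Q.vtx j = Q.edgeDir j := rfl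
  have h1 := Q.far_spec j q (fun hc => hne hc.symm)
  rw [hE] at h1
  have h2 := h (Q.far j)
  linarith

lemma vtx_mem_body (k : ZMod Q.n) : Q.vtx k ∈ Q.body :=
  subset_convexHull ℝ _ (mem_range_self k)

lemma interior_body_nonempty : (interior Q.body).Nonempty := by
  haveI := Q.nz
  show (interior (convexHull ℝ (Set.range Q.vtx))).Nonempty
  rw [(convex_convexHull ℝ _).interior_nonempty_iff_affineSpan_eq_top, affineSpan_convexHull,
    AffineSubspace.affineSpan_eq_top_iff_vectorSpan_eq_top_of_nonempty ℝ (ℝ × ℝ) (ℝ × ℝ)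
      (hs := ⟨Q.vtx 0, mem_range_self 0⟩)]
  rw [eq_top_iff]
  rintro x -
  have hu : Q.vtx 1 - Q.vtx 0 ∈ vectorSpan ℝ (Set.range Q.vtx) :=
    vsub_mem_vectorSpan ℝ (mem_range_self 1) (mem_range_self 0)
  have hw : Q.vtx 2 - Q.vtx 0 ∈ vectorSpan ℝ (Set.range Q.vtx) :=
    vsub_mem_vectorSpan ℝ (mem_range_self 2) (mem_range_self 0)
  set u := Q.vtx 1 - Q.vtx 0 with hu'
  set w := Q.vtx 2 - Q.vtx 0 with hw'
  have hΔ : cross2 u w ≠ 0 := by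
    have := Q.strict_convex 0 2 (by simpa using Q.two_ne_zero') (by simpa using Q.two_ne_one')
    rw [zero_add] at this
    exact ne_of_lt this
  have hx : x = ((cross2 u w)⁻¹ * cross2 x w) • u + ((cross2 u w)⁻¹ * cross2 u x) • w := by
    have := cross2_decomp u w x
    rw [mul_smul, mul_smul, ← smul_add, ← this, smul_smul, inv_mul_cancel₀ hΔ, one_smul]
  rw [hx]
  exact Submodule.add_mem _ (Submodule.smul_mem _ _ hu) (Submodule.smul_mem _ _ hw)

lemma body_subset_of_closed {S : Set (ℝ × ℝ)} (hS : IsClosed S)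
    (h : interior Q.body ⊆ S) : Q.body ⊆ S := by
  obtain ⟨z, hz⟩ := Q.interior_body_nonempty
  intro x hx
  have hseg : openSegment ℝ z x ⊆ interior Q.body :=
    (convex_convexHull ℝ _).openSegment_interior_self_subset_interior hz hx
  have hxc : x ∈ closure (openSegment ℝ z x) :=
    segment_subset_closure_openSegment (right_mem_segment ℝ z x)
  have : x ∈ closure S := closure_mono (hseg.trans h) hxc
  rwa [hS.closure_eq] at this

/-- The clockwise correspondence lands in maximal pairs. -/
lemma maximalPair_head_far (i : ZMod Q.n) :
    Q.MaximalPair (Q.vtx (i + 1)) (Q.vtx (Q.far i)) := by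
  set d := Q.edgeDir i with hd'
  set c₂ := cross2 d (Q.vtx i) with hc₂
  set c₁ := cross2 d (Q.vtx (Q.far i)) with hc₁
  have hde : Q.vtx (i + 1) - Q.vtx i = d := rfl
  have hub : ∀ k, cross2 d (Q.vtx k) ≤ c₂ := by
    intro k
    have := Q.sgn_nonpos i k
    rw [cross2_sub_right] at this
    linarith
  have hlb : ∀ k, c₁ ≤ cross2 d (Q.vtx k) := by
    intro k
    have := Q.far_min i k
    rw [cross2_sub_right, cross2_sub_right] at this
    linarith
  have hlt : c₁ < c₂ := by
    have := Q.depth_neg i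
    rw [cross2_sub_right] at this
    linarith
  have hhead : cross2 d (Q.vtx (i + 1)) = c₂ := by
    have : cross2 d (Q.vtx (i + 1) - Q.vtx i) = 0 := by rw [hde, cross2_self]
    rw [cross2_sub_right] at this
    linarith
  set S := {x : ℝ × ℝ | c₁ ≤ cross2 d x ∧ cross2 d x ≤ c₂} with hS
  have hbody : Q.body ⊆ S := by
    apply convexHull_min _ (convex_stripSet d c₁ c₂)
    rintro x ⟨k, rfl⟩
    exact ⟨hlb k, hub k⟩
  refine ⟨⟨i + 1, rfl⟩, ⟨Q.far i, rfl⟩, d, c₁, c₂, Q.edgeDir_ne_zero i, hlt,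
    ⟨⟨d, c₁, c₂, Q.edgeDir_ne_zero i, hlt, rfl⟩, interior_mono hbody, ?_⟩,
    Or.inr ⟨hhead, rfl⟩⟩
  rintro S' ⟨e, b₁, b₂, he, hblt, rfl⟩ hintS' hsub
  set S' := {x : ℝ × ℝ | b₁ ≤ cross2 e x ∧ cross2 e x ≤ b₂} with hS'
  have hbody' : Q.body ⊆ S' :=
    Q.body_subset_of_closed (isClosed_stripSet e b₁ b₂) (hintS'.trans interior_subset)
  have hvi : Q.vtx i ∈ S' := hbody' (Q.vtx_mem_body i)
  have hvf : Q.vtx (Q.far i) ∈ S' := hbody' (Q.vtx_mem_body (Q.far i))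
  -- the substrip must be parallel
  have hpar : cross2 d e = 0 := by
    by_contra hc
    have hline : ∀ t : ℝ, Q.vtx i + t • e ∈ S' := by
      intro t
      have : cross2 e (Q.vtx i + t • e) = cross2 e (Q.vtx i) := by
        simp [cross2, Prod.smul_def]; ring
      exact ⟨by rw [this]; exact hvi.1, by rw [this]; exact hvi.2⟩
    have hval : ∀ t : ℝ, cross2 d (Q.vtx i + t • e) ≤ c₂ := fun t => (hsub (hline t)).2
    have hval2 : ∀ t : ℝ, c₁ ≤ cross2 d (Q.vtx i + t • e) := fun t => (hsub (hline t)).1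
    have hexp : ∀ t : ℝ, cross2 d (Q.vtx i + t • e) = c₂ + t * cross2 d e := by
      intro t; simp [cross2, Prod.smul_def, hc₂]; ring
    rcases lt_or_gt_of_ne hc with hneg | hpos
    · have := hval2 ((c₁ - c₂ - 1) / cross2 d e)
      rw [hexp, div_mul_cancel₀ _ hc] at this
      linarith
    · have := hval ((c₂ - c₂ + 1) / cross2 d e)
      rw [hexp, div_mul_cancel₀ _ hc] at this
      linarith
  obtain ⟨k, hk⟩ := parallel_of_cross2_eq_zero (Q.edgeDir_ne_zero i) hpar
  have hk0 : k ≠ 0 := by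
    intro h0; rw [h0, zero_smul] at hk; exact he hk
  have hkv : ∀ x : ℝ × ℝ, cross2 e x = k * cross2 d x := by
    intro x; rw [hk, cross2_smul_left]
  apply Set.Subset.antisymm hsub
  intro x hx
  obtain ⟨hx1, hx2⟩ := hx
  have hb1 : b₁ ≤ k * c₂ ∧ k * c₂ ≤ b₂ := by
    have h1 := hvi.1; have h2 := hvi.2
    rw [hkv] at h1 h2
    exact ⟨h1, h2⟩
  have hb2 : b₁ ≤ k * c₁ ∧ k * c₁ ≤ b₂ := by
    have h1 := hvf.1; have h2 := hvf.2
    rw [hkv] at h1 h2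
    exact ⟨h1, h2⟩
  constructor <;> rw [hkv]
  · rcases lt_or_gt_of_ne hk0 with hkneg | hkpos
    · nlinarith [hb1.1, hb2.1]
    · nlinarith [hb1.1, hb2.1]
  · rcases lt_or_gt_of_ne hk0 with hkneg | hkpos
    · nlinarith [hb1.2, hb2.2]
    · nlinarith [hb1.2, hb2.2]



lemma add_one_ne_sub_one (p : ZMod Q.n) : p + 1 ≠ p - 1 := by
  intro h
  apply Q.add_two_ne (p - 1)
  have h2 : p - 1 + 2 = p + 1 := by ring
  rw [h2, h]

lemma key_far (d : ℝ × ℝ) (hd : d ≠ 0) (p q : ZMod Q.n)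
    (hmax : ∀ k, cross2 d (Q.vtx k) ≤ cross2 d (Q.vtx p))
    (hmin : ∀ k, cross2 d (Q.vtx q) ≤ cross2 d (Q.vtx k))
    (hpq : p ≠ q) :
    Q.far (p - 1) = q ∨ Q.far (q - 1) = p := by
  have hp1 : p - 1 + 1 = p := Q.sub_one_add_one p
  have hq1 : q - 1 + 1 = q := Q.sub_one_add_one q
  set ep := Q.edgeDir (p - 1) with hep
  set eqv := Q.edgeDir (q - 1) with heq
  have hepE : ep = Q.vtx p - Q.vtx (p - 1) := by
    rw [hep]; show Q.vtx (p - 1 + 1) - Q.vtx (p - 1) = _; rw [hp1]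
  have heqE : eqv = Q.vtx q - Q.vtx (q - 1) := by
    rw [heq]; show Q.vtx (q - 1 + 1) - Q.vtx (q - 1) = _; rw [hq1]
  have hsc : ∀ (j k : ZMod Q.n), k ≠ j → k ≠ j + 1 →
      cross2 (Q.edgeDir j) (Q.vtx k - Q.vtx j) < 0 := fun j k h1 h2 => Q.strict_convex j k h1 h2
  have hA1 : 0 ≤ cross2 d ep := by
    rw [hepE, cross2_sub_right]
    have := hmax (p - 1); linarith
  have hA2 : cross2 d eqv ≤ 0 := by
    rw [heqE, cross2_sub_right]
    have := hmin (q - 1); linarith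
  by_cases hB1 : cross2 d ep = 0
  · -- d is parallel to the edge ending at p
    obtain ⟨k, hk⟩ := parallel_of_cross2_eq_zero (Q.edgeDir_ne_zero (p - 1))
      (by rw [cross2_skew, ← hep, hB1, neg_zero])
    have hk0 : k ≠ 0 := by rintro rfl; rw [zero_smul] at hk; exact hd hk
    have h1 : cross2 ep (Q.vtx (p + 1) - Q.vtx p) < 0 := by
      have hc1 := hsc (p - 1) (p + 1) (Q.add_one_ne_sub_one p) (by rw [hp1]; exact Q.add_one_ne p)
      have hc2 : cross2 ep (Q.vtx p - Q.vtx (p - 1)) = 0 := by rw [← hepE, cross2_self]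
      have hc3 := cross2_sub_sub ep (Q.vtx (p + 1)) (Q.vtx p) (Q.vtx (p - 1))
      rw [← hep] at hc1
      linarith
    have h2 : cross2 d (Q.vtx (p + 1) - Q.vtx p) ≤ 0 := by
      rw [cross2_sub_right]
      have := hmax (p + 1); linarith
    rw [hk, cross2_smul_left] at h2
    have hkpos : 0 < k := lt_of_le_of_ne (by nlinarith) (Ne.symm hk0)
    left
    apply Q.far_eq (p - 1) q
    intro m
    have hm := hmin m
    rw [hk, cross2_smul_left, cross2_smul_left] at hm
    have hm2 : cross2 ep (Q.vtx q) ≤ cross2 ep (Q.vtx m) := le_of_mul_le_mul_left hm hkpos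
    rw [← hep, cross2_sub_right, cross2_sub_right]
    linarith
  · by_cases hB2 : cross2 d eqv = 0
    · obtain ⟨k, hk⟩ := parallel_of_cross2_eq_zero (Q.edgeDir_ne_zero (q - 1))
        (by rw [cross2_skew, ← heq, hB2, neg_zero])
      have hk0 : k ≠ 0 := by rintro rfl; rw [zero_smul] at hk; exact hd hk
      have h1 : cross2 eqv (Q.vtx (q + 1) - Q.vtx q) < 0 := by
        have hc1 := hsc (q - 1) (q + 1) (Q.add_one_ne_sub_one q) (by rw [hq1]; exact Q.add_one_ne q)
        have hc2 : cross2 eqv (Q.vtx q - Q.vtx (q - 1)) = 0 := by rw [← heqE, cross2_self]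
        have hc3 := cross2_sub_sub eqv (Q.vtx (q + 1)) (Q.vtx q) (Q.vtx (q - 1))
        rw [← heq] at hc1
        linarith
      have h2 : 0 ≤ cross2 d (Q.vtx (q + 1) - Q.vtx q) := by
        rw [cross2_sub_right]
        have := hmin (q + 1); linarith
      rw [hk, cross2_smul_left] at h2
      have hkneg : k < 0 := lt_of_le_of_ne (by nlinarith) hk0
      right
      apply Q.far_eq (q - 1) p
      intro m
      have hm := hmax m
      rw [hk, cross2_smul_left, cross2_smul_left] at hm
      have hm2 : cross2 eqv (Q.vtx p) ≤ cross2 eqv (Q.vtx m) := by nlinarith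
      rw [← heq, cross2_sub_right, cross2_sub_right]
      linarith
    · have hB3 : 0 < cross2 d ep := lt_of_le_of_ne hA1 (Ne.symm hB1)
      have hB4 : cross2 d eqv < 0 := lt_of_le_of_ne hA2 hB2
      have hpmq : p - 1 ≠ q - 1 := by
        intro h
        apply hpq
        have h2 := congrArg (· + 1) h
        simpa [hp1, hq1] using h2
      have hc : cross2 ep eqv ≠ 0 := Q.no_parallel (p - 1) (q - 1) hpmq
      rcases lt_or_gt_of_ne hc with hcneg | hcpos
      · left
        apply Q.far_eq (p - 1) q
        intro m
        have hsuff : 0 ≤ cross2 ep (Q.vtx m - Q.vtx q) := by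
          by_cases hmq : m = q
          · rw [hmq, sub_self, cross2_zero_right]
          · have hjac := cross2_jacobi d eqv ep (Q.vtx m - Q.vtx q)
            have hX : 0 ≤ cross2 d (Q.vtx m - Q.vtx q) := by
              rw [cross2_sub_right]; have := hmin m; linarith
            by_cases hmq1 : m = q - 1
            · have hne : Q.vtx m - Q.vtx q = -eqv := by rw [hmq1, heqE]; abel
              have hY : cross2 eqv (Q.vtx m - Q.vtx q) = 0 := by
                rw [hne, cross2_neg_right, cross2_self, neg_zero]
              have hXs : 0 < cross2 d (Q.vtx m - Q.vtx q) := by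
                rw [hne, cross2_neg_right]; linarith
              nlinarith [hjac, hY, hXs, hB3, hB4, hcneg]
            · have hY : cross2 eqv (Q.vtx m - Q.vtx q) < 0 := by
                have hc1 := hsc (q - 1) m hmq1 (by rw [hq1]; exact hmq)
                rw [← heq] at hc1
                have hc2 : cross2 eqv (Q.vtx q - Q.vtx (q - 1)) = 0 := by
                  rw [← heqE, cross2_self]
                have hc3 := cross2_sub_sub eqv (Q.vtx m) (Q.vtx q) (Q.vtx (q - 1))
                linarith
              nlinarith [hjac, hX, hY, hB3, hB4, hcneg]
        have hc3 := cross2_sub_sub ep (Q.vtx m) (Q.vtx q) (Q.vtx (p - 1))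
        rw [← hep]
        linarith
      · right
        apply Q.far_eq (q - 1) p
        intro m
        have hsuff : 0 ≤ cross2 eqv (Q.vtx m - Q.vtx p) := by
          by_cases hmp : m = p
          · rw [hmp, sub_self, cross2_zero_right]
          · have hjac := cross2_jacobi d ep eqv (Q.vtx m - Q.vtx p)
            have hX : cross2 d (Q.vtx m - Q.vtx p) ≤ 0 := by
              rw [cross2_sub_right]; have := hmax m; linarith
            have hskew : cross2 eqv ep = - cross2 ep eqv := by rw [cross2_skew]
            by_cases hmp1 : m = p - 1
            · have hne : Q.vtx m - Q.vtx p = -ep := by rw [hmp1, hepE]; abel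
              have hY : cross2 ep (Q.vtx m - Q.vtx p) = 0 := by
                rw [hne, cross2_neg_right, cross2_self, neg_zero]
              have hXs : cross2 d (Q.vtx m - Q.vtx p) < 0 := by
                rw [hne, cross2_neg_right]; linarith
              nlinarith [hjac, hY, hXs, hB3, hB4, hcpos, hskew]
            · have hY : cross2 ep (Q.vtx m - Q.vtx p) < 0 := by
                have hc1 := hsc (p - 1) m hmp1 (by rw [hp1]; exact hmp)
                rw [← hep] at hc1
                have hc2 : cross2 ep (Q.vtx p - Q.vtx (p - 1)) = 0 := by
                  rw [← hepE, cross2_self]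
                have hc3 := cross2_sub_sub ep (Q.vtx m) (Q.vtx p) (Q.vtx (p - 1))
                linarith
              nlinarith [hjac, hX, hY, hB3, hB4, hcpos, hskew]
        have hc3 := cross2_sub_sub eqv (Q.vtx m) (Q.vtx p) (Q.vtx (q - 1))
        rw [← heq]
        linarith

lemma spoke_surj {v w : ℝ × ℝ} (h : Q.MaximalPair v w) :
    ∃ i : ZMod Q.n, Q.spoke i = segment ℝ v w := by
  obtain ⟨⟨p, hp⟩, ⟨q0, hq0⟩, d, c₁, c₂, hd, hlt, hmin, hor⟩ := h
  have hbody : Q.body ⊆ {x : ℝ × ℝ | c₁ ≤ cross2 d x ∧ cross2 d x ≤ c₂} :=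
    Q.body_subset_of_closed (isClosed_stripSet d c₁ c₂) (hmin.2.1.trans interior_subset)
  have hub : ∀ k, cross2 d (Q.vtx k) ≤ c₂ := fun k => (hbody (Q.vtx_mem_body k)).2
  have hlb : ∀ k, c₁ ≤ cross2 d (Q.vtx k) := fun k => (hbody (Q.vtx_mem_body k)).1
  rcases hor with ⟨hv, hw⟩ | ⟨hv, hw⟩
  · -- v at c₁ (min), w at c₂ (max)
    have hvp : cross2 d (Q.vtx p) = c₁ := by rw [hp, hv]
    have hwq : cross2 d (Q.vtx q0) = c₂ := by rw [hq0, hw]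
    have hne : q0 ≠ p := by
      intro hcc; rw [hcc, hvp] at hwq; linarith
    rcases Q.key_far d hd q0 p (fun k => by rw [hwq]; exact hub k)
        (fun k => by rw [hvp]; exact hlb k) hne with h1 | h1
    · refine ⟨q0 - 1, ?_⟩
      show segment ℝ (Q.vtx (q0 - 1 + 1)) (Q.vtx (Q.far (q0 - 1))) = segment ℝ v w
      rw [Q.sub_one_add_one, h1, hp, hq0, segment_symm]
    · refine ⟨p - 1, ?_⟩
      show segment ℝ (Q.vtx (p - 1 + 1)) (Q.vtx (Q.far (p - 1))) = segment ℝ v w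
      rw [Q.sub_one_add_one, h1, hp, hq0]
  · -- v at c₂ (max), w at c₁ (min)
    have hvp : cross2 d (Q.vtx p) = c₂ := by rw [hp, hv]
    have hwq : cross2 d (Q.vtx q0) = c₁ := by rw [hq0, hw]
    have hne : p ≠ q0 := by
      intro hcc; rw [hcc, hwq] at hvp; linarith
    rcases Q.key_far d hd p q0 (fun k => by rw [hvp]; exact hub k)
        (fun k => by rw [hwq]; exact hlb k) hne with h1 | h1
    · refine ⟨p - 1, ?_⟩
      show segment ℝ (Q.vtx (p - 1 + 1)) (Q.vtx (Q.far (p - 1))) = segment ℝ v w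
      rw [Q.sub_one_add_one, h1, hp, hq0]
    · refine ⟨q0 - 1, ?_⟩
      show segment ℝ (Q.vtx (q0 - 1 + 1)) (Q.vtx (Q.far (q0 - 1))) = segment ℝ v w
      rw [Q.sub_one_add_one, h1, hp, hq0, segment_symm]

lemma spoke_inj {i j : ZMod Q.n} (h : Q.spoke i = Q.spoke j) : i = j := by
  have hab : Q.vtx (i + 1) ≠ Q.vtx (Q.far i) :=
    fun hc => Q.far_ne_head i (Q.vtx_injective hc).symm
  have hcd : Q.vtx (j + 1) ≠ Q.vtx (Q.far j) :=
    fun hc => Q.far_ne_head j (Q.vtx_injective hc).symm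
  have h' : segment ℝ (Q.vtx (i + 1)) (Q.vtx (Q.far i))
      = segment ℝ (Q.vtx (j + 1)) (Q.vtx (Q.far j)) := h
  rcases segment_ends_cases hab hcd h' with ⟨h1, h2⟩ | ⟨h1, h2⟩
  · have := Q.vtx_injective h1
    exact add_right_cancel this
  · exfalso
    have e1 : i + 1 = Q.far j := Q.vtx_injective h1
    have e2 : Q.far i = j + 1 := Q.vtx_injective h2
    have hs1 := Q.far_spec i j (by rw [e2]; exact fun hcc => Q.add_one_ne j hcc.symm)
    rw [e2] at hs1
    have hd1 : cross2 (Q.vtx (i + 1) - Q.vtx i) (Q.vtx (j + 1) - Q.vtx j) < 0 := by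
      have hc3 := cross2_sub_sub (Q.vtx (i + 1) - Q.vtx i) (Q.vtx (j + 1)) (Q.vtx j) (Q.vtx i)
      linarith
    have hs2 := Q.far_spec j i (by rw [← e1]; exact fun hcc => Q.add_one_ne i hcc.symm)
    rw [← e1] at hs2
    have hd2 : cross2 (Q.vtx (j + 1) - Q.vtx j) (Q.vtx (i + 1) - Q.vtx i) < 0 := by
      have hc3 := cross2_sub_sub (Q.vtx (j + 1) - Q.vtx j) (Q.vtx (i + 1)) (Q.vtx i) (Q.vtx j)
      linarith
    have hsk := cross2_skew (Q.vtx (i + 1) - Q.vtx i) (Q.vtx (j + 1) - Q.vtx j)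
    linarith

end NicePolygon

/-- The clockwise correspondence `e_i ↦ S_i` is a bijection between the edges and the
spokes of a nice polygon. -/
theorem clockwise_correspondence_bijective (Q : NicePolygon) :
    Set.BijOn Q.spoke Set.univ {S : Set (ℝ × ℝ) | Q.IsSpoke S} := by
  refine ⟨?_, ?_, ?_⟩
  · intro i _
    exact ⟨Q.vtx (i + 1), Q.vtx (Q.far i), Q.maximalPair_head_far i, rfl⟩
  · intro i _ j _ h
    exact Q.spoke_inj h
  · intro S hS
    obtain ⟨v, w, hvw, rfl⟩ := hS
    obtain ⟨i, hi⟩ := Q.spoke_surj hvw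
    exact ⟨i, trivial, hi⟩
end
end

section
/- Let P be a nice n-gon, let a → b be an admissible path (with b ≥ a after adding n to b if necessary), and for a ≤ i ≤ b set W_i = 0 if the spoke S_i is not involved in the path a → b, and otherwise let W_i be the vector pointing from the first endpoint of S_i to its last endpoint (in the orientation induced by the path). Then for every p ∈ T(a → b), ψ(p) − p = Σ_{i=a}^{b} 2W_i. -/
open Set Bornology

noncomputable section

/-- For an admissible path `a → b`, with `W_i = 0` for the uninvolved indices
`a ≤ i ≤ b` and `W_i` the vector from the first to the last endpoint of the spoke `S_i`
(as traversed by the path) for the involved ones, every `p ∈ T(a → b)` satisfies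
`ψ(p) - p = ∑_{i=a}^{b} 2 W_i`. -/
theorem displacement_sum (Q : NicePolygon) (γ : AdmissiblePath Q) (W : ℤ → ℝ × ℝ)
    (hW0 : ∀ i : ℤ, γ.aIdx ≤ i → i ≤ γ.bIdx → (∀ k : Fin γ.len, γ.idx k ≠ i) → W i = 0)
    (hW : ∀ k : Fin γ.len, W (γ.idx k) = γ.ept k.succ - γ.ept k.castSucc)
    (p : ℝ × ℝ) (hp : p ∈ γ.tileSet) :
    ∃ q : ℝ × ℝ, Q.sqRel p q ∧
      q - p = ∑ i ∈ Finset.Icc γ.aIdx γ.bIdx, (2 : ℝ) • W i := by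
  classical
  obtain ⟨h1, h2⟩ := hp
  have hpos := γ.pos
  refine ⟨(2:ℝ) • γ.lastV - (2:ℝ) • γ.firstV + p,
    Or.inr ⟨(2:ℝ) • γ.firstV - p, h1, h2⟩, ?_⟩
  have hinj : Function.Injective γ.idx := γ.mono.injective
  set S : Finset ℤ := Finset.image γ.idx Finset.univ with hS
  have hsub : S ⊆ Finset.Icc γ.aIdx γ.bIdx := by
    intro i hi
    simp only [hS, Finset.mem_image, Finset.mem_univ, true_and] at hi
    obtain ⟨k, rfl⟩ := hi
    refine Finset.mem_Icc.mpr ⟨γ.mono.monotone ?_, γ.mono.monotone ?_⟩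
    · exact Fin.mk_le_of_le_val (Nat.zero_le _)
    · exact Fin.le_def.mpr (by have := k.2; simp; omega)
  have hsum1 : ∑ i ∈ Finset.Icc γ.aIdx γ.bIdx, W i = ∑ i ∈ S, W i := by
    refine (Finset.sum_subset hsub ?_).symm
    intro i hi hni
    refine hW0 i (Finset.mem_Icc.mp hi).1 (Finset.mem_Icc.mp hi).2 ?_
    intro k hk
    exact hni (by simp [hS, ← hk])
  have hsum2 : ∑ i ∈ S, W i = ∑ k : Fin γ.len, W (γ.idx k) :=
    Finset.sum_image (fun a _ b _ h => hinj h)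
  set f : ℕ → ℝ × ℝ := fun m => γ.ept ⟨min m γ.len, by omega⟩ with hf
  have hsum3 : ∑ k : Fin γ.len, W (γ.idx k) = f γ.len - f 0 := by
    have : ∀ k : Fin γ.len, W (γ.idx k) = f (k.1 + 1) - f k.1 := by
      intro k
      rw [hW k]
      have hk := k.2
      have hk := k.2
      congr 1
      · congr 1
        exact Fin.ext (by simp only [Fin.val_succ]; omega)
      · congr 1
        exact Fin.ext (by simp only [Fin.coe_castSucc]; omega)
    rw [Finset.sum_congr rfl (fun k _ => this k),
      Fin.sum_univ_eq_sum_range (fun i => f (i + 1) - f i) γ.len,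
      Finset.sum_range_sub]
  have hf0 : f 0 = γ.firstV := by
    simp only [hf, AdmissiblePath.firstV]
    congr 1
  have hfl : f γ.len = γ.lastV := by
    simp only [hf, AdmissiblePath.lastV]
    congr 1
    exact Fin.ext (by simp [Fin.last])
  have key : ∑ i ∈ Finset.Icc γ.aIdx γ.bIdx, W i = γ.lastV - γ.firstV := by
    rw [hsum1, hsum2, hsum3, hf0, hfl]
  calc (2:ℝ) • γ.lastV - (2:ℝ) • γ.firstV + p - p
      = (2:ℝ) • (γ.lastV - γ.firstV) := by rw [smul_sub]; abel
    _ = (2:ℝ) • ∑ i ∈ Finset.Icc γ.aIdx γ.bIdx, W i := by rw [key]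
    _ = ∑ i ∈ Finset.Icc γ.aIdx γ.bIdx, (2:ℝ) • W i := Finset.smul_sum
end
end
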